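/- Let a = (1 + √10)/6 and Tₙ = {x ∈ ℝⁿ : x₁ > 1/2, ‖x - a·e₁‖ < 1/2, ‖x‖ < 1}. Then the set Sₙ = Tₙ ∪ (−Tₙ) does not contain two points at Euclidean distance exactly 1. -/
import Mathlib


open MeasureTheory Metric

noncomputable def a : ℝ := (1 + Real.sqrt 10) / 6

noncomputable def T (n : ℕ) (hn : 0 < n) : Set (EuclideanSpace ℝ (Fin n)) :=
  {x | x ⟨0, hn⟩ > 1/2 ∧ ‖x - a • EuclideanSpace.single (⟨0, hn⟩ : Fin n) (1 : ℝ)‖ < 1/2 ∧ ‖x‖ < 1}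

lemma coord_dist_le {n : ℕ} (x y : EuclideanSpace ℝ (Fin n)) (i : Fin n) :
    dist (x i) (y i) ≤ dist x y := by
  rw [EuclideanSpace.dist_eq]
  have h1 : dist (x i) (y i) = Real.sqrt ((x i - y i)^2) := by
    rw [Real.sqrt_sq_eq_abs, Real.dist_eq]
  rw [h1]
  apply Real.sqrt_le_sqrt
  have : (x i - y i)^2 = dist (x i) (y i)^2 := by
    rw [Real.dist_eq, sq_abs]
  rw [this]
  exact Finset.single_le_sum (f := fun j => dist (x j) (y j)^2)
    (fun j _ => sq_nonneg _) (Finset.mem_univ i)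

lemma diam_T {n : ℕ} (hn : 0 < n) {x y : EuclideanSpace ℝ (Fin n)}
    (hx : x ∈ T n hn) (hy : y ∈ T n hn) : dist x y < 1 := by
  have hx2 := hx.2.1
  have hy2 := hy.2.1
  calc dist x y ≤ dist x (a • EuclideanSpace.single (⟨0, hn⟩ : Fin n) (1 : ℝ))
        + dist (a • EuclideanSpace.single (⟨0, hn⟩ : Fin n) (1 : ℝ)) y := dist_triangle _ _ _
    _ < 1/2 + 1/2 := by
        apply add_lt_add
        · rwa [dist_eq_norm]
        · rwa [dist_comm, dist_eq_norm]
    _ = 1 := by norm_num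

lemma cross_T {n : ℕ} (hn : 0 < n) {x y : EuclideanSpace ℝ (Fin n)}
    (hx : x ∈ T n hn) (hy : -y ∈ T n hn) : 1 < dist x y := by
  have hx1 := hx.1
  have hy1 := hy.1
  have key : dist (x ⟨0, hn⟩) (y ⟨0, hn⟩) ≤ dist x y := coord_dist_le x y _
  have : (-y) ⟨0, hn⟩ = -(y ⟨0, hn⟩) := rfl
  rw [this] at hy1
  have : 1 < dist (x ⟨0, hn⟩) (y ⟨0, hn⟩) := by
    rw [Real.dist_eq]
    have : 1 < x ⟨0, hn⟩ - y ⟨0, hn⟩ := by linarith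
    calc 1 < x ⟨0, hn⟩ - y ⟨0, hn⟩ := this
      _ ≤ |x ⟨0, hn⟩ - y ⟨0, hn⟩| := le_abs_self _
  linarith

theorem stmt_2 (n : ℕ) (hn : 2 ≤ n) :
    ∀ x ∈ T n (by omega) ∪ -(T n (by omega)),
      ∀ y ∈ T n (by omega) ∪ -(T n (by omega)), dist x y ≠ 1 := by
  have hn0 : 0 < n := by omega
  intro x hx y hy
  rcases hx with hx | hx <;> rcases hy with hy | hy
  · exact ne_of_lt (diam_T hn0 hx hy)
  · exact ne_of_gt (cross_T hn0 hx (Set.mem_neg.mp hy))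
  · rw [dist_comm]; exact ne_of_gt (cross_T hn0 hy (Set.mem_neg.mp hx))
  · have : dist (-x) (-y) < 1 := diam_T hn0 (Set.mem_neg.mp hx) (Set.mem_neg.mp hy)
    rw [dist_neg_neg] at this
    exact ne_of_lt this
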